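/- Hayashi–Nagaoka operator inequality: Let S and T be positive semi-definite operators with S ≤ I, and let c > 0. Then I − (S+T)^{-1/2} S (S+T)^{-1/2} ≤ (1+c)(I − S) + (2 + c + 1/c) T, where (S+T)^{-1/2} denotes the square root of the generalized (Moore–Penrose) inverse of S + T. -/

import Mathlib

/-!
Write `N = S + T`, `M = N^{-1/2}` (on the support of `N`) and `R = T^{1/2}`. Since `M N M` is
the support projection of `N`, `1 - M S M = (1 - M N M) + M T M`. Splitting
`R M = R (M - 1) + R` and using `(a + b)⋆(a + b) ≤ (1 + c) a⋆a + (1 + 1/c) b⋆b` gives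
`M T M ≤ (1 + c) (M - 1) T (M - 1) + (1 + 1/c) T ≤ (1 + c) (M - 1) N (M - 1) + (1 + 1/c) T`,
and `(M - 1) N (M - 1) = M N M - 2 √N + N`. What is left over is
`c (1 - M N M) + 2 (1 + c) (√N - S)`, which is nonnegative because the square root is operator
monotone and `S² ≤ S ≤ N`. The argument works in any C⋆-algebra in which `x ↦ x^{-1/2}` is
continuous on the spectrum of `N`, which is automatic for matrices.
-/

open Matrix Kronecker Complex ComplexOrder

noncomputable section

namespace QIT

open scoped Classical

variable {n : Type*} [Fintype n] [DecidableEq n]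

/-- Square root of a positive semidefinite matrix (junk value `0` otherwise). -/
def msqrt (A : Matrix n n ℂ) : Matrix n n ℂ :=
  if h : A.PosSemidef then
    (h.1.eigenvectorUnitary : Matrix n n ℂ) *
      Matrix.diagonal ((↑) ∘ (Real.sqrt ·) ∘ h.1.eigenvalues) *
      (star h.1.eigenvectorUnitary : Matrix n n ℂ)
  else 0

/-- Fidelity `F(ρ,σ) = Tr √(√σ ρ √σ)`. -/
def fid (ρ σ : Matrix n n ℂ) : ℝ :=
  ((msqrt (msqrt σ * ρ * msqrt σ)).trace).re

/-- Purified distance `P(ρ,σ) = √(1 - F(ρ,σ)²)`. -/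
def Pdist (ρ σ : Matrix n n ℂ) : ℝ := Real.sqrt (1 - fid ρ σ ^ 2)

/-- A density operator: positive semidefinite with unit trace. -/
def IsDensity (ρ : Matrix n n ℂ) : Prop := ρ.PosSemidef ∧ ρ.trace = 1

/-- A test (POVM element): `0 ≤ Λ ≤ I`. -/
def IsTest (Λ : Matrix n n ℂ) : Prop := Λ.PosSemidef ∧ (1 - Λ).PosSemidef

/-- Smooth hypothesis testing divergence `D_H^ε(ρ‖σ)` (log base 2). -/
def DH (ε : ℝ) (ρ σ : Matrix n n ℂ) : ℝ :=
  sSup {x : ℝ | ∃ Λ : Matrix n n ℂ, IsTest Λ ∧ (Λ * ρ).trace.re ≥ 1 - ε ∧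
    x = Real.logb 2 (1 / (Λ * σ).trace.re)}

/-- Max-relative entropy `D_max(ρ‖σ)`. -/
def Dmax (ρ σ : Matrix n n ℂ) : ℝ :=
  sInf {l : ℝ | ((((2:ℝ) ^ l : ℝ) : ℂ) • σ - ρ).PosSemidef}

/-- Matrix logarithm (base 2) via the spectral decomposition. -/
def mlog (A : Matrix n n ℂ) : Matrix n n ℂ :=
  if h : A.IsHermitian then
    (h.eigenvectorUnitary : Matrix n n ℂ) *
      Matrix.diagonal (fun i => (Real.logb 2 (h.eigenvalues i) : ℂ)) *
      (h.eigenvectorUnitary : Matrix n n ℂ)ᴴ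
  else 0

/-- Quantum relative entropy `D(ρ‖σ) = Tr ρ (log ρ - log σ)` (log base 2). -/
def Drel (ρ σ : Matrix n n ℂ) : ℝ :=
  ((ρ * mlog ρ).trace - (ρ * mlog σ).trace).re

/-- Square root of the Moore–Penrose inverse, on the support. -/
def pinvSqrt (A : Matrix n n ℂ) : Matrix n n ℂ :=
  if h : A.IsHermitian then
    (h.eigenvectorUnitary : Matrix n n ℂ) *
      Matrix.diagonal (fun i =>
        ((if h.eigenvalues i = 0 then 0 else (Real.sqrt (h.eigenvalues i))⁻¹ : ℝ) : ℂ)) *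
      (h.eigenvectorUnitary : Matrix n n ℂ)ᴴ
  else 0

variable {m : Type*} [Fintype m] [DecidableEq m]

/-- Partial trace over the second tensor factor. -/
def ptraceSnd (ρ : Matrix (n × m) (n × m) ℂ) : Matrix n n ℂ :=
  Matrix.of fun i j => ∑ k, ρ (i, k) (j, k)

/-- Partial trace over the first tensor factor. -/
def ptraceFst (ρ : Matrix (n × m) (n × m) ℂ) : Matrix m m ℂ :=
  Matrix.of fun i j => ∑ k, ρ (k, i) (k, j)

section StarOrderedRing

variable {A : Type*} [Ring A] [StarRing A] [PartialOrder A] [StarOrderedRing A] [Algebra ℝ A]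
  [StarModule ℝ A]

theorem star_add_mul_add_le (a b : A) {c : ℝ} (hc : 0 < c) :
    star (a + b) * (a + b) ≤ (1 + c) • (star a * a) + (1 + c⁻¹) • (star b * b) := by
  obtain ⟨σ, hσ, rfl⟩ : ∃ σ : ℝ, 0 < σ ∧ σ ^ 2 = c :=
    ⟨√c, Real.sqrt_pos.2 hc, Real.sq_sqrt hc.le⟩
  have hσσ : σ * σ⁻¹ = 1 := mul_inv_cancel₀ hσ.ne'
  rw [← sub_nonneg]
  convert star_mul_self_nonneg (σ • a - σ⁻¹ • b) using 1
  simp only [star_sub, star_smul, star_trivial, star_add, add_mul, mul_add, sub_mul, mul_sub,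
    smul_mul_smul_comm]
  linear_combination (norm := module) hσσ • (star a * b + star b * a)

end StarOrderedRing

section CStarAlgebra

variable {A : Type*} [CStarAlgebra A] [PartialOrder A] [StarOrderedRing A]

theorem mul_self_le_self {a : A} (ha₀ : 0 ≤ a) (ha₁ : a ≤ 1) : a * a ≤ a := by
  obtain ⟨r, hr, rfl⟩ : ∃ r : A, 0 ≤ r ∧ r * r = a :=
    ⟨CFC.sqrt a, CFC.sqrt_nonneg a, CFC.sqrt_mul_sqrt_self a⟩
  calc r * r * (r * r) = star r * (r * r) * r := by rw [hr.star_eq]; simp only [mul_assoc]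
    _ ≤ star r * 1 * r := star_left_conjugate_le_conjugate ha₁ r
    _ = r * r := by rw [hr.star_eq, mul_one]

theorem le_sqrt_add {a b : A} (ha₀ : 0 ≤ a) (ha₁ : a ≤ 1) (hb : 0 ≤ b) :
    a ≤ CFC.sqrt (a + b) := by
  calc a = CFC.sqrt (a * a) := (CFC.sqrt_mul_self a).symm
    _ ≤ CFC.sqrt (a + b) :=
        CFC.sqrt_le_sqrt _ _ ((mul_self_le_self ha₀ ha₁).trans (le_add_of_nonneg_right hb))

variable {a : A}

theorem cfc_inv_sqrt_mul_self (ha : 0 ≤ a)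
    (hcont : ContinuousOn (fun x : ℝ => (√x)⁻¹) (spectrum ℝ a)) :
    cfc (fun x : ℝ => (√x)⁻¹) a * a = CFC.sqrt a := by
  have := cfc_mul (fun x : ℝ => (√x)⁻¹) (fun x => x) a
  rw [cfc_id' ℝ a (ha := ha.isSelfAdjoint)] at this
  rw [← this, CFC.sqrt_eq_real_sqrt a, cfcₙ_eq_cfc]
  refine cfc_congr fun x hx => ?_
  have hx : 0 ≤ x := spectrum_nonneg_of_nonneg ha hx
  rcases eq_or_ne (√x) 0 with h | h
  · simp [h]
  · calc (√x)⁻¹ * x = (√x)⁻¹ * (√x * √x) := by rw [Real.mul_self_sqrt hx]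
      _ = √x := inv_mul_cancel_left₀ h _

theorem self_mul_cfc_inv_sqrt (ha : 0 ≤ a)
    (hcont : ContinuousOn (fun x : ℝ => (√x)⁻¹) (spectrum ℝ a)) :
    a * cfc (fun x : ℝ => (√x)⁻¹) a = CFC.sqrt a := by
  have h := congrArg star (cfc_inv_sqrt_mul_self ha hcont)
  rwa [star_mul, ha.isSelfAdjoint.star_eq, (cfc_predicate _ a : IsSelfAdjoint _).star_eq,
    (CFC.sqrt_nonneg a).isSelfAdjoint.star_eq] at h

theorem cfc_inv_sqrt_mul_self_mul_le_one (ha : 0 ≤ a)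
    (hcont : ContinuousOn (fun x : ℝ => (√x)⁻¹) (spectrum ℝ a)) :
    cfc (fun x : ℝ => (√x)⁻¹) a * a * cfc (fun x : ℝ => (√x)⁻¹) a ≤ 1 := by
  rw [cfc_inv_sqrt_mul_self ha hcont, CFC.sqrt_eq_real_sqrt a, cfcₙ_eq_cfc, ← cfc_mul _ _ a]
  refine cfc_le_one _ a fun x _ => ?_
  rcases eq_or_ne (√x) 0 with h | h
  · simp [h]
  · rw [mul_inv_cancel₀ h]

theorem one_sub_cfc_inv_sqrt_conj_le {S T : A} (hS₀ : 0 ≤ S) (hS₁ : S ≤ 1) (hT : 0 ≤ T)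
    (hcont : ContinuousOn (fun x : ℝ => (√x)⁻¹) (spectrum ℝ (S + T))) {c : ℝ}
    (hc : 0 < c) :
    1 - cfc (fun x : ℝ => (√x)⁻¹) (S + T) * S * cfc (fun x : ℝ => (√x)⁻¹) (S + T) ≤
      (1 + c) • (1 - S) + (2 + c + 1 / c) • T := by
  set N := S + T with hN
  set M := cfc (fun x : ℝ => (√x)⁻¹) N
  have hN₀ : 0 ≤ N := add_nonneg hS₀ hT
  have hM : IsSelfAdjoint M := cfc_predicate _ N
  set R := CFC.sqrt T
  have hR : IsSelfAdjoint R := (CFC.sqrt_nonneg T).isSelfAdjoint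
  have hRR : R * R = T := CFC.sqrt_mul_sqrt_self T
  have hMTM : M * T * M ≤ (1 + c) • ((M - 1) * N * (M - 1)) + (1 + c⁻¹) • T :=
    calc M * T * M = star (R * (M - 1) + R) * (R * (M - 1) + R) := by
          rw [show R * (M - 1) + R = R * M by noncomm_ring, star_mul, hM.star_eq, hR.star_eq,
            ← hRR]
          simp only [mul_assoc]
      _ ≤ (1 + c) • (star (R * (M - 1)) * (R * (M - 1))) + (1 + c⁻¹) • (star R * R) :=
          star_add_mul_add_le _ _ hc
      _ = (1 + c) • ((M - 1) * T * (M - 1)) + (1 + c⁻¹) • T := by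
          rw [star_mul, hR.star_eq, (hM.sub (.one A)).star_eq, ← hRR]
          simp only [mul_assoc]
      _ ≤ (1 + c) • ((M - 1) * N * (M - 1)) + (1 + c⁻¹) • T := by
          gcongr
          exact (hM.sub (.one A)).conjugate_le_conjugate (le_add_of_nonneg_left hS₀)
  have hexpand : (M - 1) * N * (M - 1) = M * N * M - 2 • CFC.sqrt N + N := by
    rw [show (M - 1) * N * (M - 1) = M * N * M - (M * N + N * M) + N by noncomm_ring, two_smul,
      self_mul_cfc_inv_sqrt hN₀ hcont]
    congr 3
    exact cfc_inv_sqrt_mul_self hN₀ hcont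
  calc 1 - M * S * M = (1 - M * N * M) + M * T * M := by rw [hN]; noncomm_ring
    _ ≤ (1 - M * N * M) + ((1 + c) • ((M - 1) * N * (M - 1)) + (1 + c⁻¹) • T) := by gcongr
    _ = (1 + c) • (1 - S) + (2 + c + 1 / c) • T -
          (c • (1 - M * N * M) + (2 * (1 + c)) • (CFC.sqrt N - S)) := by
        rw [hexpand, hN]
        module
    _ ≤ (1 + c) • (1 - S) + (2 + c + 1 / c) • T := by
        refine sub_le_self _ (add_nonneg (smul_nonneg hc.le ?_) (smul_nonneg (by positivity) ?_))
        · exact sub_nonneg.2 (cfc_inv_sqrt_mul_self_mul_le_one hN₀ hcont)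
        · exact sub_nonneg.2 (le_sqrt_add hS₀ hS₁ hT)

end CStarAlgebra

theorem pinvSqrt_eq_cfc {A : Matrix n n ℂ} (hA : A.IsHermitian) :
    pinvSqrt A = cfc (fun x : ℝ => (√x)⁻¹) A := by
  rw [hA.cfc_eq, pinvSqrt, dif_pos hA, IsHermitian.cfc, Unitary.conjStarAlgAut_apply,
    star_eq_conjTranspose]
  congr 3
  funext i
  split_ifs with h <;> simp [h]

/-- Hayashi–Nagaoka operator inequality. -/
theorem statement3 {n : Type*} [Fintype n] [DecidableEq n]
    (S T : Matrix n n ℂ) (hS : S.PosSemidef) (hSI : ((1 : Matrix n n ℂ) - S).PosSemidef)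
    (hT : T.PosSemidef) (c : ℝ) (hc : 0 < c) :
    (((1 + c : ℝ) : ℂ) • ((1 : Matrix n n ℂ) - S) + ((2 + c + 1 / c : ℝ) : ℂ) • T -
      ((1 : Matrix n n ℂ) - pinvSqrt (S + T) * S * pinvSqrt (S + T))).PosSemidef := by
  open scoped Matrix.Norms.L2Operator MatrixOrder in
  have hle := one_sub_cfc_inv_sqrt_conj_le hS.nonneg (le_iff.2 hSI) hT.nonneg
    (finite_real_spectrum.continuousOn _) hc
  rw [← pinvSqrt_eq_cfc (hS.add hT).isHermitian, le_iff] at hle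
  simpa only [Complex.coe_smul] using hle

end QIT
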